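/- Let z' = (1−r)e^{iθ} with 0 < r small and z ∈ 𝔻 with |z − z'| ≥ r. Then the unit disk Green's function satisfies g(z, z') = g(0,z')·(1 − |z|²)/|z − e^{iθ}|² · (1 + O(r/|z − z'|)); more precisely there is a universal constant C such that |g(z,z')·|z − e^{iθ}|²/((1−|z|²)·g(0,z')) − 1| ≤ C·r/|z − z'| whenever r ≤ 1/2 and |z−z'| ≥ r. -/

import Mathlib

/-- The Green's function of the open unit disk. -/
noncomputable def greenDisk (z w : ℂ) : ℝ :=
  Real.log (‖(starRingEnd ℂ) w * z - 1‖) - Real.log (‖w - z‖)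

/-!
The identity `|w̄z − 1|² = |z − w|² + (1 − |z|²)(1 − |w|²)` gives `g(z, w) = ½ log (1 + t)` with
`t = (1 − |z|²)(1 − |w|²)/|z − w|²`, so the ratio to be estimated factors as
`(log (1 + t) / t) · ((1 − |w|²) / (2 g(0, w))) · (|z − e^{iθ}|² / |z − w|²)`.
For `w = (1 − r)e^{iθ}` each factor is `1 + O(r/|z − w|)`: `t ≤ 8r/|z − w|` because
`1 − |z|² ≤ 2(1 − |z|) ≤ 2(r + |z − w|)`, the middle factor is `1 + O(r)`, and `|z − e^{iθ}|`
differs from `|z − w|` by at most `|w − e^{iθ}| = r`.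
-/

open Complex

lemma abs_mul_sub_one_le {x y α β : ℝ} (hx : |x - 1| ≤ α) (hy : |y - 1| ≤ β) :
    |x * y - 1| ≤ α + β + α * β := by
  calc |x * y - 1| = |(x - 1) + (y - 1) + (x - 1) * (y - 1)| := by ring_nf
    _ ≤ |x - 1| + |y - 1| + |x - 1| * |y - 1| := by rw [← abs_mul]; exact abs_add_three _ _ _
    _ ≤ α + β + α * β := by
      have hα : 0 ≤ α := (abs_nonneg _).trans hx
      gcongr

lemma abs_log_one_add_div_self_sub_one_le {t : ℝ} (ht : 0 < t) :
    |Real.log (1 + t) / t - 1| ≤ t := by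
  have hupper : Real.log (1 + t) ≤ t := by
    linarith [Real.log_le_sub_one_of_pos (by linarith : 0 < 1 + t)]
  have hlower : t - t ^ 2 ≤ Real.log (1 + t) := by
    have h := Real.one_sub_inv_le_log_of_pos (by linarith : 0 < 1 + t)
    have hinv : 1 - (1 + t)⁻¹ = t / (1 + t) := by field_simp; ring
    have hquad : t - t ^ 2 ≤ t / (1 + t) := by rw [le_div_iff₀ (by linarith)]; nlinarith
    linarith
  rw [div_sub_one ht.ne', abs_div, abs_of_pos ht, div_le_iff₀ ht, abs_le]
  constructor <;> nlinarith

lemma abs_one_sub_sq_div_two_neg_log_sub_one_le {r : ℝ} (hr : 0 < r) (hr2 : r ≤ 1 / 2) :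
    |(1 - (1 - r) ^ 2) / (2 * -Real.log (1 - r)) - 1| ≤ 3 * r := by
  have hlower : r ≤ -Real.log (1 - r) := by
    linarith [Real.log_le_sub_one_of_pos (by linarith : 0 < 1 - r)]
  have hupper : -Real.log (1 - r) ≤ r + 2 * r ^ 2 := by
    have h := Real.one_sub_inv_le_log_of_pos (by linarith : 0 < 1 - r)
    have hinv : 1 + r + 2 * r ^ 2 ≥ (1 - r)⁻¹ := by
      rw [ge_iff_le, inv_le_iff_one_le_mul₀ (by linarith)]; nlinarith
    linarith
  have hL : 0 < 2 * -Real.log (1 - r) := by linarith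
  rw [div_sub_one hL.ne', abs_div, abs_of_pos hL, div_le_iff₀ hL, abs_le]
  constructor <;> nlinarith

lemma abs_sq_div_sq_sub_one_le {a b r : ℝ} (ha : 0 < a) (hra : r ≤ a) (hab : |b - a| ≤ r) :
    |b ^ 2 / a ^ 2 - 1| ≤ 3 * r / a := by
  have ha2 : 0 < a ^ 2 := by positivity
  rw [div_sub_one ha2.ne', abs_div, abs_of_pos ha2, div_le_div_iff₀ ha2 ha,
    show b ^ 2 - a ^ 2 = (b - a) * (b + a) by ring, abs_mul]
  have hba : |b + a| ≤ 3 * a := by rw [abs_le] at hab ⊢; constructor <;> linarith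
  have hr : 0 ≤ r := (abs_nonneg _).trans hab
  calc |b - a| * |b + a| * a ≤ r * (3 * a) * a := by gcongr
    _ = 3 * r * a ^ 2 := by ring

lemma abs_green_ratio_sub_one_le {r a b s : ℝ} (hr : 0 < r) (hr2 : r ≤ 1 / 2) (hra : r ≤ a)
    (ha2 : a ≤ 2) (hab : |b - a| ≤ r) (hs : 0 < s) (hsa : s ≤ 4 * a) :
    |Real.log (1 + s * (1 - (1 - r) ^ 2) / a ^ 2) / 2 * b ^ 2 / (s * -Real.log (1 - r)) - 1|
      ≤ 300 * r / a := by
  have ha : 0 < a := hr.trans_le hra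
  have hu : 0 < 1 - (1 - r) ^ 2 := by nlinarith
  have hL : 0 < -Real.log (1 - r) := neg_pos.mpr (Real.log_neg (by linarith) (by linarith))
  set t := s * (1 - (1 - r) ^ 2) / a ^ 2 with ht_def
  have ht : 0 < t := by positivity
  have hfactor : Real.log (1 + t) / 2 * b ^ 2 / (s * -Real.log (1 - r)) =
      Real.log (1 + t) / t * ((1 - (1 - r) ^ 2) / (2 * -Real.log (1 - r))) * (b ^ 2 / a ^ 2) := by
    rw [ht_def]; field_simp
  have hA : |Real.log (1 + t) / t - 1| ≤ 8 * (r / a) :=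
    calc _ ≤ t := abs_log_one_add_div_self_sub_one_le ht
      _ ≤ 4 * a * (2 * r) / a ^ 2 := by rw [ht_def]; gcongr; nlinarith
      _ = 8 * (r / a) := by field_simp; ring
  have hB : |(1 - (1 - r) ^ 2) / (2 * -Real.log (1 - r)) - 1| ≤ 6 * (r / a) :=
    (abs_one_sub_sq_div_two_neg_log_sub_one_le hr hr2).trans
      (by rw [mul_div_assoc', le_div_iff₀ ha]; nlinarith)
  have hD : |b ^ 2 / a ^ 2 - 1| ≤ 3 * (r / a) :=
    (abs_sq_div_sq_sub_one_le ha hra hab).trans_eq (by ring)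
  have hε : r / a ≤ 1 := (div_le_one ha).mpr hra
  have hε0 : 0 < r / a := div_pos hr ha
  rw [hfactor, mul_div_assoc]
  refine (abs_mul_sub_one_le (abs_mul_sub_one_le hA hB) hD).trans ?_
  generalize r / a = ε at hε hε0
  nlinarith [mul_nonneg hε0.le (sub_nonneg.mpr hε),
    mul_nonneg (mul_nonneg hε0.le hε0.le) (sub_nonneg.mpr hε)]

lemma norm_conj_mul_sub_one_sq (z w : ℂ) :
    ‖(starRingEnd ℂ) w * z - 1‖ ^ 2 = ‖z - w‖ ^ 2 + (1 - ‖z‖ ^ 2) * (1 - ‖w‖ ^ 2) := by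
  simp only [Complex.sq_norm, normSq_apply, mul_re, mul_im, sub_re, sub_im, conj_re, conj_im, one_re,
    one_im]
  ring

lemma greenDisk_eq_half_log {z w : ℂ} (hzw : z ≠ w) (hz : ‖z‖ ≤ 1) (hw : ‖w‖ ≤ 1) :
    greenDisk z w = Real.log (1 + (1 - ‖z‖ ^ 2) * (1 - ‖w‖ ^ 2) / ‖z - w‖ ^ 2) / 2 := by
  have ha : 0 < ‖z - w‖ ^ 2 := by positivity [sub_ne_zero.mpr hzw]
  have hsu : 0 ≤ (1 - ‖z‖ ^ 2) * (1 - ‖w‖ ^ 2) := by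
    apply mul_nonneg <;> nlinarith [norm_nonneg z, norm_nonneg w]
  have hc : ‖(starRingEnd ℂ) w * z - 1‖ ^ 2 =
      ‖z - w‖ ^ 2 * (1 + (1 - ‖z‖ ^ 2) * (1 - ‖w‖ ^ 2) / ‖z - w‖ ^ 2) := by
    rw [norm_conj_mul_sub_one_sq, mul_add, mul_one, mul_div_cancel₀ _ ha.ne']
  have hlog := congrArg Real.log hc
  rw [Real.log_pow, Real.log_mul ha.ne' (by positivity), Real.log_pow] at hlog
  rw [greenDisk, norm_sub_rev w z]
  push_cast at hlog
  linarith

lemma greenDisk_zero_left (w : ℂ) : greenDisk 0 w = -Real.log ‖w‖ := by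
  simp [greenDisk]

/-- Near-boundary asymptotics of the unit disk Green's function: for
`z' = (1−r)e^{iθ}` and `|z − z'| ≥ r`,
`g(z,z') = g(0,z')·(1−|z|²)/|z−e^{iθ}|² · (1 + O(r/|z−z'|))`. -/
theorem greenDisk_near_boundary :
    ∃ C : ℝ, 0 < C ∧ ∀ (r θ : ℝ) (z : ℂ), 0 < r → r ≤ 1 / 2 → ‖z‖ < 1 →
      r ≤ ‖z - (↑(1 - r) : ℂ) * Complex.exp (θ * Complex.I)‖ →
      |greenDisk z ((↑(1 - r) : ℂ) * Complex.exp (θ * Complex.I)) *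
            ‖z - Complex.exp (θ * Complex.I)‖ ^ 2 /
            ((1 - ‖z‖ ^ 2) *
              greenDisk 0 ((↑(1 - r) : ℂ) * Complex.exp (θ * Complex.I))) - 1| ≤
        C * r / ‖z - (↑(1 - r) : ℂ) * Complex.exp (θ * Complex.I)‖ := by
  refine ⟨300, by norm_num, fun r θ z hr hr2 hz hdist => ?_⟩
  set e := exp (θ * I)
  set w := (↑(1 - r) : ℂ) * e
  have he : ‖e‖ = 1 := norm_exp_ofReal_mul_I θ
  have hw : ‖w‖ = 1 - r := by
    rw [norm_mul, he, mul_one, norm_real, Real.norm_of_nonneg (by linarith)]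
  have hwe : ‖w - e‖ = r := by
    rw [show w - e = (↑(-r) : ℂ) * e by simp only [w]; push_cast; ring, norm_mul, he, mul_one,
      norm_real, Real.norm_eq_abs, abs_neg, abs_of_pos hr]
  have hzw : z ≠ w := by rintro rfl; rw [sub_self, norm_zero] at hdist; linarith
  have hba : |‖z - e‖ - ‖z - w‖| ≤ r :=
    hwe ▸ sub_sub_sub_cancel_left e w z ▸ abs_norm_sub_norm_le (z - e) (z - w)
  have hw_sub_z : ‖w‖ - ‖z‖ ≤ ‖z - w‖ := norm_sub_rev w z ▸ norm_sub_norm_le w z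
  have ha2 : ‖z - w‖ ≤ 2 := (norm_sub_le z w).trans (by linarith)
  have hs : 0 < 1 - ‖z‖ ^ 2 := by nlinarith [norm_nonneg z]
  have hsa : 1 - ‖z‖ ^ 2 ≤ 4 * ‖z - w‖ := by nlinarith [norm_nonneg z]
  rw [greenDisk_eq_half_log hzw hz.le (by linarith), greenDisk_zero_left, hw]
  exact abs_green_ratio_sub_one_le hr hr2 hdist ha2 hba hs hsa
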